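/- Let s > 1 be an integer and let w, m be nonzero integers such that w is a good representative of the s-good residue class w + smℤ. Then for every integer r with r ≡ w (mod sm) and r ∉ {0, w, gcd(w,sm), −gcd(w,sm)}, the number s/r is a 2-step relation number. -/

import Mathlib

/-- `a = [[1,0],[1,1]]` as an element of `SL(2, ℂ)`. -/
def matA : Matrix.SpecialLinearGroup (Fin 2) ℂ :=
  ⟨!![1, 0; 1, 1], by simp [Matrix.det_fin_two_of]⟩

/-- `b_q = [[1,q],[0,1]]` as an element of `SL(2, ℂ)`. -/
def matB (q : ℂ) : Matrix.SpecialLinearGroup (Fin 2) ℂ :=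
  ⟨!![1, q; 0, 1], by simp [Matrix.det_fin_two_of]⟩

/-- `q` is a relation number: the homomorphism `F₂ → SL(2,ℂ)`, `x ↦ a`, `y ↦ b_q`,
is not injective. -/
def IsRelationNumber (q : ℂ) : Prop :=
  ¬ Function.Injective
    (FreeGroup.lift (fun i : Bool => if i then matA else matB q) :
      FreeGroup Bool →* Matrix.SpecialLinearGroup (Fin 2) ℂ)

/-- `q` is an `ℓ`-step relation number: there are `k ≤ ℓ` and nonzero integers
`m_1, …, m_{2k+1}` with `b_q^{m_1} a^{m_2} ⋯ b_q^{m_{2k+1}}` lower triangular. -/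
def IsStepRelationNumber (ℓ : ℕ) (q : ℂ) : Prop :=
  ∃ k : ℕ, k ≤ ℓ ∧ ∃ m : Fin (2 * k + 1) → ℤ, (∀ i, m i ≠ 0) ∧
    ((List.ofFn (fun i : Fin (2 * k + 1) =>
      (if (i : ℕ) % 2 = 0 then matB q else matA) ^ (m i))).prod).val 0 1 = 0

/-- The residue class `w + smℤ` is `s`-good with good representative `w`. -/
def IsGoodRep (s w m : ℤ) : Prop :=
  ∃ y : ℤ, y * (Int.gcd w (s * m) : ℤ) ∣ m * (Int.gcd w s : ℤ) ∧
    (w ∣ s * m * y + (Int.gcd w (s * m) : ℤ) ∨ w ∣ s * m * y - (Int.gcd w (s * m) : ℤ))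

/-- `[[1,0],[x,1]]` as an element of `SL(2, ℂ)`. -/
def matAx (x : ℂ) : Matrix.SpecialLinearGroup (Fin 2) ℂ :=
  ⟨!![1, 0; x, 1], by simp [Matrix.det_fin_two_of]⟩

lemma matB_mul (x y : ℂ) : matB x * matB y = matB (x + y) := by
  apply Subtype.ext
  show (matB x).val * (matB y).val = _
  simp [matB, Matrix.mul_fin_two]
  ring_nf

lemma matAx_mul (x y : ℂ) : matAx x * matAx y = matAx (x + y) := by
  apply Subtype.ext
  show (matAx x).val * (matAx y).val = _
  simp [matAx, Matrix.mul_fin_two]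

lemma matB_zero : matB 0 = 1 := by
  apply Subtype.ext
  simp [matB, ← Matrix.one_fin_two]

lemma matAx_zero : matAx 0 = 1 := by
  apply Subtype.ext
  simp [matAx, ← Matrix.one_fin_two]

lemma matB_pow (q : ℂ) (n : ℕ) : matB q ^ n = matB (n * q) := by
  induction n with
  | zero => simp [matB_zero]
  | succ k ih =>
      rw [pow_succ, ih, matB_mul]
      congr 1
      push_cast; ring

lemma matAx_pow (x : ℂ) (n : ℕ) : matAx x ^ n = matAx (n * x) := by
  induction n with
  | zero => simp [matAx_zero]
  | succ k ih =>
      rw [pow_succ, ih, matAx_mul]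
      congr 1
      push_cast; ring

lemma matB_zpow (q : ℂ) (n : ℤ) : matB q ^ n = matB (n * q) := by
  cases n with
  | ofNat k => rw [Int.ofNat_eq_coe, zpow_natCast, matB_pow]; norm_num
  | negSucc k =>
      rw [zpow_negSucc, matB_pow]
      refine inv_eq_of_mul_eq_one_right ?_
      rw [matB_mul, show (k+1 : ℕ) * q + (Int.negSucc k : ℂ) * q = 0 by
        push_cast [Int.negSucc_eq]; ring, matB_zero]

lemma matAx_zpow (x : ℂ) (n : ℤ) : matAx x ^ n = matAx (n * x) := by
  cases n with
  | ofNat k => rw [Int.ofNat_eq_coe, zpow_natCast, matAx_pow]; norm_num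
  | negSucc k =>
      rw [zpow_negSucc, matAx_pow]
      refine inv_eq_of_mul_eq_one_right ?_
      rw [matAx_mul, show (k+1 : ℕ) * x + (Int.negSucc k : ℂ) * x = 0 by
        push_cast [Int.negSucc_eq]; ring, matAx_zero]

lemma matA_zpow (n : ℤ) : matA ^ n = matAx n := by
  have : matA = matAx 1 := rfl
  rw [this, matAx_zpow, mul_one]

lemma entry01 (x1 a2 x3 a4 x5 : ℂ) :
    (matB x1 * matAx a2 * matB x3 * matAx a4 * matB x5).val 0 1
      = x1 + x3 + x5 + a2*x1*x3 + a2*x1*x5 + a4*x1*x5 + a4*x3*x5 + a2*a4*x1*x3*x5 := by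
  show ((matB x1).val * (matAx a2).val * (matB x3).val * (matAx a4).val * (matB x5).val) 0 1 = _
  simp [matB, matAx, Matrix.mul_fin_two]
  ring

lemma prod5 (q : ℂ) (mm : Fin (2 * 2 + 1) → ℤ) :
    (List.ofFn (fun i : Fin (2 * 2 + 1) =>
      (if (i : ℕ) % 2 = 0 then matB q else matA) ^ (mm i))).prod
    = matB q ^ (mm 0) * matA ^ (mm 1) * matB q ^ (mm 2) * matA ^ (mm 3) * matB q ^ (mm 4) := by
  simp [List.ofFn_succ, mul_assoc, show (Fin.succ 2 : Fin 5) = 3 from rfl,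
    show ((Fin.succ 2).succ : Fin 5) = 4 from rfl]

theorem stmt11 (s w m : ℤ) (hs : 1 < s) (hw : w ≠ 0) (hm : m ≠ 0)
    (hgood : IsGoodRep s w m)
    (r : ℤ) (hr : s * m ∣ r - w) (hr0 : r ≠ 0) (hrw : r ≠ w)
    (hrg : r ≠ (Int.gcd w (s * m) : ℤ)) (hrg' : r ≠ -(Int.gcd w (s * m) : ℤ)) :
    IsStepRelationNumber 2 ((s : ℂ) / (r : ℂ)) := by
  have hD0 : (0 : ℤ) < (Int.gcd w (s * m) : ℤ) := by
    exact_mod_cast Int.gcd_pos_iff.mpr (Or.inl hw)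
  have hDw : ((Int.gcd w (s * m) : ℤ)) ∣ w := Int.gcd_dvd_left _ _
  have hDsm : ((Int.gcd w (s * m) : ℤ)) ∣ s * m := Int.gcd_dvd_right _ _
  obtain ⟨t, ht⟩ := hr
  -- extract a usable witness (y, ε, z) with s*m*y + ε*D = w*z, y ∣ m, y ≠ 0
  obtain ⟨y, ε, z, hy0, hym, hε, hz⟩ : ∃ y ε z : ℤ, y ≠ 0 ∧ y ∣ m ∧
      (ε = 1 ∨ ε = -1) ∧ s * m * y + ε * (Int.gcd w (s * m) : ℤ) = w * z := by
    obtain ⟨y, hyd, hcase⟩ := hgood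
    by_cases hy : y = 0
    · subst hy
      have hwD : w ∣ (Int.gcd w (s * m) : ℤ) := by
        rcases hcase with h | h
        · simpa using h
        · simpa using (dvd_neg.mpr h)
      have h1 : w ∣ s * m * m + 1 * (Int.gcd w (s * m) : ℤ) := by
        refine dvd_add ?_ (by simpa using hwD)
        exact Dvd.dvd.mul_right (hwD.trans hDsm) m
      obtain ⟨z, hz⟩ := h1
      exact ⟨m, 1, z, hm, dvd_refl m, Or.inl rfl, hz⟩
    · have hd0 : ((Int.gcd w s : ℤ)) ≠ 0 := by
        have : (0 : ℤ) < (Int.gcd w s : ℤ) := by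
          exact_mod_cast Int.gcd_pos_iff.mpr (Or.inl hw)
        omega
      have hdD : ((Int.gcd w s : ℤ)) ∣ (Int.gcd w (s * m) : ℤ) := by
        refine Int.dvd_coe_gcd (Int.gcd_dvd_left _ _) ?_
        exact (Int.gcd_dvd_right _ _).mul_right m
      have hym : y ∣ m := by
        obtain ⟨c, hc⟩ := hyd
        obtain ⟨D', hD'⟩ := hdD
        refine ⟨D' * c, ?_⟩
        have h2 : m * (Int.gcd w s : ℤ) = y * (D' * c) * (Int.gcd w s : ℤ) := by
          rw [hc, hD']; ring
        exact mul_right_cancel₀ hd0 h2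
      rcases hcase with h | h
      · obtain ⟨z, hz⟩ := h
        exact ⟨y, 1, z, hy, hym, Or.inl rfl, by linarith⟩
      · obtain ⟨z, hz⟩ := h
        exact ⟨y, -1, z, hy, hym, Or.inr rfl, by linarith⟩
  have hDr : ((Int.gcd w (s * m) : ℤ)) ∣ r := by
    have hrw' : r = w + s * m * t := by linarith
    rw [hrw']
    exact dvd_add hDw (hDsm.mul_right t)
  obtain ⟨R, hDR⟩ := hDr
  obtain ⟨p, hmp⟩ := hym
  -- basic facts
  have hεε : ε * ε = 1 := by rcases hε with rfl | rfl <;> norm_num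
  have hε0 : ε ≠ 0 := by rcases hε with rfl | rfl <;> norm_num
  have hp0 : p ≠ 0 := by
    intro h; apply hm; rw [hmp, h, mul_zero]
  have ht0 : t ≠ 0 := by
    intro h; apply hrw; rw [h, mul_zero] at ht; linarith
  have hR0 : R ≠ 0 := by
    intro h; apply hr0; rw [hDR, h, mul_zero]
  -- the key relation
  have H : r * z = s * (y * p) * (y + t * z) + ε * (Int.gcd w (s * m) : ℤ) := by
    have hrw' : r = w + s * m * t := by linarith
    calc r * z = w * z + s * m * t * z := by rw [hrw']; ring
    _ = s * (y * p) * (y + t * z) + ε * (Int.gcd w (s * m) : ℤ) := by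
        rw [← hz, hmp]; ring
  have hY0 : y + t * z ≠ 0 := by
    intro h
    rw [h, mul_zero, zero_add, hDR] at H
    have hRz : R * z = ε := by
      have hgcd0 : ((Int.gcd w (s * m) : ℤ)) ≠ 0 := hD0.ne'
      apply mul_left_cancel₀ hgcd0
      linear_combination H
    have hunit : IsUnit R := by
      refine IsUnit.of_mul_eq_one (a := R) (z * ε) ?_
      calc R * (z * ε) = (R * z) * ε := by ring
      _ = ε * ε := by rw [hRz]
      _ = 1 := hεε
    rcases Int.isUnit_iff.mp hunit with h1 | h1
    · exact hrg (by rw [hDR, h1, mul_one])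
    · exact hrg' (by rw [hDR, h1]; ring)
  -- the five exponents
  set c1 : ℤ := -(R * (y * p)) with hc1
  set c2 : ℤ := -(ε * (y + t * z)) with hc2
  set c3 : ℤ := -(ε * p * t) with hc3
  set c4 : ℤ := ε * y with hc4
  set c5 : ℤ := R * p * (y + t * z) with hc5
  have hc10 : c1 ≠ 0 := by
    simp only [hc1, neg_ne_zero]
    exact mul_ne_zero hR0 (mul_ne_zero hy0 hp0)
  have hc20 : c2 ≠ 0 := by
    simp only [hc2, neg_ne_zero]
    exact mul_ne_zero hε0 hY0
  have hc30 : c3 ≠ 0 := by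
    simp only [hc3, neg_ne_zero]
    exact mul_ne_zero (mul_ne_zero hε0 hp0) ht0
  have hc40 : c4 ≠ 0 := mul_ne_zero hε0 hy0
  have hc50 : c5 ≠ 0 := mul_ne_zero (mul_ne_zero hR0 hp0) hY0
  -- the integer identity
  have Istar : r^2 * (c1 + c3 + c5)
      + r * s * (c1*c2*c5 + c1*c4*c5 + c3*c4*c5 + c1*c2*c3)
      + s^2 * (c1*c2*c3*c4*c5) = 0 := by
    rw [hc1, hc2, hc3, hc4, hc5]
    rw [hDR] at H ⊢
    rcases hε with rfl | rfl
    · linear_combination (s*p*t*R^2*(y*p)*(y+t*z) + R^2*(Int.gcd w (s * m) : ℤ)*p*t) * H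
    · linear_combination (-(s*p*t*R^2*(y*p)*(y+t*z)) + R^2*(Int.gcd w (s * m) : ℤ)*p*t) * H
  -- assemble
  refine ⟨2, le_refl 2, ![c1, c2, c3, c4, c5], ?_, ?_⟩
  · intro i
    fin_cases i
    · simpa using hc10
    · simpa using hc20
    · simpa using hc30
    · simpa using hc40
    · simpa using hc50
  · rw [prod5, matB_zpow, matB_zpow, matB_zpow, matA_zpow, matA_zpow]
    have e1 : (![c1, c2, c3, c4, c5] : Fin 5 → ℤ) 0 = c1 := rfl
    have e2 : (![c1, c2, c3, c4, c5] : Fin 5 → ℤ) 1 = c2 := rfl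
    have e3 : (![c1, c2, c3, c4, c5] : Fin 5 → ℤ) 2 = c3 := rfl
    have e4 : (![c1, c2, c3, c4, c5] : Fin 5 → ℤ) 3 = c4 := rfl
    have e5 : (![c1, c2, c3, c4, c5] : Fin 5 → ℤ) 4 = c5 := rfl
    rw [e1, e2, e3, e4, e5, entry01]
    have hrC : (r : ℂ) ≠ 0 := Int.cast_ne_zero.mpr hr0
    have hFc : (r:ℂ)^2 * ((c1:ℂ) + c3 + c5)
        + (r:ℂ) * (s:ℂ) * ((c1:ℂ)*c2*c5 + c1*c4*c5 + c3*c4*c5 + c1*c2*c3)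
        + (s:ℂ)^2 * ((c1:ℂ)*c2*c3*c4*c5) = 0 := by
      exact_mod_cast congrArg (Int.cast : ℤ → ℂ) Istar
    have hu : (r:ℂ) * (r:ℂ)⁻¹ = 1 := mul_inv_cancel₀ hrC
    simp only [div_eq_mul_inv]
    linear_combination ((s:ℂ) * ((r:ℂ)⁻¹)^3) * hFc
      + (-(s:ℂ)*(r:ℂ)⁻¹*(1+(r:ℂ)⁻¹*(r:ℂ))*((c1:ℂ)+(c3:ℂ)+(c5:ℂ))
        - (s:ℂ)^2*((r:ℂ)⁻¹)^2*((c1:ℂ)*(c2:ℂ)*(c5:ℂ) + (c1:ℂ)*(c4:ℂ)*(c5:ℂ)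
          + (c3:ℂ)*(c4:ℂ)*(c5:ℂ) + (c1:ℂ)*(c2:ℂ)*(c3:ℂ))) * hu
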